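/- arXiv:2204.08160 — 2 statements merged into one kernel-verified Lean document; each statement's English description precedes it below -/
import Mathlib

section
/- Let W be an n×n matrix, φ a stochastic vector with Wφ = φ and 𝟙ᵀW = 𝟙ᵀ, constants C > 0 and δ ∈ (0,1] such that ‖W^s − φ𝟙ᵀ‖ ≤ C(1−δ)^s for all s ≥ 0, where ‖·‖ is the operator norm. Then for γ ∈ (0,1] and B = (1−γ)I + γW, it holds that ‖B^t − φ𝟙ᵀ‖ ≤ C(1−γδ)^t for all t ≥ 0. -/
set_option maxHeartbeats 1000000
set_option synthInstance.maxHeartbeats 200000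

theorem stmt_2 (n : ℕ) (W : Matrix (Fin n) (Fin n) ℝ) (φ : Fin n → ℝ)
    (hcol : ∀ j, ∑ i, W i j = 1) (hφsum : ∑ i, φ i = 1)
    (hφ : W.mulVec φ = φ)
    (C δ : ℝ) (hC : 0 < C) (hδ0 : 0 < δ) (hδ1 : δ ≤ 1)
    (hW : ∀ s : ℕ,
      ‖Matrix.toEuclideanCLM (𝕜 := ℝ) (n := Fin n) (W ^ s - Matrix.vecMulVec φ (fun _ => 1))‖
        ≤ C * (1 - δ) ^ s)
    (γ : ℝ) (hγ0 : 0 < γ) (hγ1 : γ ≤ 1) :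
    ∀ t : ℕ,
      ‖Matrix.toEuclideanCLM (𝕜 := ℝ) (n := Fin n)
          ((((1 - γ) • (1 : Matrix (Fin n) (Fin n) ℝ) + γ • W)) ^ t
            - Matrix.vecMulVec φ (fun _ => 1))‖
        ≤ C * (1 - γ * δ) ^ t := by
  intro t
  set P : Matrix (Fin n) (Fin n) ℝ := Matrix.vecMulVec φ (fun _ => 1) with hPdef
  have hcomm : Commute ((1 - γ) • (1 : Matrix (Fin n) (Fin n) ℝ)) (γ • W) :=
    ((Commute.one_left W).smul_left (1 - γ)).smul_right γ
  set c : ℕ → ℝ := fun s => (t.choose s : ℝ) * (1 - γ) ^ (t - s) * γ ^ s with hcdef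
  -- Binomial expansion of B^t
  have hBt : (((1 - γ) • (1 : Matrix (Fin n) (Fin n) ℝ) + γ • W)) ^ t
      = ∑ s ∈ Finset.range (t + 1), c s • W ^ s := by
    rw [add_comm, (hcomm.symm).add_pow]
    refine Finset.sum_congr rfl fun s hs => ?_
    rw [smul_pow, smul_pow, one_pow, smul_mul_smul_comm, mul_one,
      (Nat.commute_cast _ _).eq, ← nsmul_eq_mul, ← Nat.cast_smul_eq_nsmul ℝ, smul_smul]
    congr 1; ring
  -- coefficients sum to 1
  have hsum1 : ∑ s ∈ Finset.range (t + 1), c s = 1 := by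
    have h := add_pow γ (1 - γ) t
    rw [add_sub_cancel, one_pow] at h
    exact (Finset.sum_congr rfl fun s hs => by rw [hcdef]; ring).trans h.symm
  -- key algebraic identities for P
  have hWP : W * P = P := by
    ext i j
    have := congrFun hφ i
    have h2 : ∑ x, W i x * φ x = φ i := by
      simpa [Matrix.mulVec, dotProduct] using this
    simp [Matrix.mul_apply, hPdef, Matrix.vecMulVec_apply, h2]
  have hWsP : ∀ s : ℕ, W ^ s * P = P := by
    intro s
    induction s with
    | zero => simp
    | succ s ih => rw [pow_succ', mul_assoc, ih, hWP]
  -- B^t - P as convex combination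
  have hkey : (((1 - γ) • (1 : Matrix (Fin n) (Fin n) ℝ) + γ • W)) ^ t - P
      = ∑ s ∈ Finset.range (t + 1), c s • (W ^ s - P) := by
    rw [hBt]
    simp only [smul_sub, Finset.sum_sub_distrib, ← Finset.sum_smul, hsum1, one_smul]
  have hcnonneg : ∀ s, 0 ≤ c s := by
    intro s
    rw [hcdef]
    have h1 : (0:ℝ) ≤ 1 - γ := by linarith
    positivity
  calc ‖Matrix.toEuclideanCLM (𝕜 := ℝ) (n := Fin n)
          ((((1 - γ) • (1 : Matrix (Fin n) (Fin n) ℝ) + γ • W)) ^ t - P)‖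
      = ‖∑ s ∈ Finset.range (t + 1),
          c s • Matrix.toEuclideanCLM (𝕜 := ℝ) (n := Fin n) (W ^ s - P)‖ := by
        rw [hkey]; rw [map_sum]; simp only [map_smul]
    _ ≤ ∑ s ∈ Finset.range (t + 1),
          ‖c s • Matrix.toEuclideanCLM (𝕜 := ℝ) (n := Fin n) (W ^ s - P)‖ :=
        norm_sum_le _ _
    _ ≤ ∑ s ∈ Finset.range (t + 1), c s * (C * (1 - δ) ^ s) := by
        refine Finset.sum_le_sum fun s hs => ?_
        have hns := norm_smul (c s) (Matrix.toEuclideanCLM (𝕜 := ℝ) (n := Fin n) (W ^ s - P))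
        rw [Real.norm_eq_abs, abs_of_nonneg (hcnonneg s)] at hns
        rw [hns]
        exact mul_le_mul_of_nonneg_left (hW s) (hcnonneg s)
    _ = C * (1 - γ * δ) ^ t := by
        have h := add_pow (γ * (1 - δ)) (1 - γ) t
        have h2 : γ * (1 - δ) + (1 - γ) = 1 - γ * δ := by ring
        rw [h2] at h
        rw [h, Finset.mul_sum]
        refine Finset.sum_congr rfl fun s hs => ?_
        rw [hcdef, mul_pow]; ring
end

section
/- Let δ ∈ (0,1], β > 0, C > 0, ω ∈ (0,1], and set ω̃ = √(1−ω), γ = 2ωδ/(8βδ + 4β²C + 4ωδ²), ρ = 1 − γδ(1−ω̃²)/4 = 1 − ωγδ/4. Then √(1−ω)·[(1+γβ)/ρ + γβ + γ²β²C/(ρ(ρ − 1 + γδ))] ≤ 1. -/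
/-! Put `u = γβ`, `v = γβ²C/δ` and `ε = ωγδ/4`. The definition of `γ` is exactly the linear
relation `4u + 2v + 8ε = ω`, and `ρ = 1 - ε`, `ρ - 1 + γδ = γδ(4 - ω)/4`. Bounding `√(1 - ω)` by
`1 - ω/2`, the first-order terms cancel against `(1 - ω/2)(1 + ω/2) = 1 - ω²/4`, and the remaining
second-order terms are controlled by `v ≤ ω/2`. -/

lemma Real.sqrt_one_sub_le_one_sub_half {ω : ℝ} (hω : ω ≤ 2) : √(1 - ω) ≤ 1 - ω / 2 :=
  Real.sqrt_le_iff.mpr ⟨by linarith, by nlinarith [sq_nonneg ω]⟩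

lemma one_sub_half_mul_le_one {u v ε ω : ℝ} (hu : 0 ≤ u) (hv : 0 ≤ v) (hε : 0 ≤ ε)
    (hω : ω ≤ 1) (hsum : 4 * u + 2 * v + 8 * ε = ω) :
    (1 - ω / 2) * ((1 + u) / (1 - ε) + u + 4 * v / ((1 - ε) * (4 - ω))) ≤ 1 := by
  have hε1 : 0 < 1 - ε := by linarith
  have h4 : 0 < 4 - ω := by linarith
  set w := 4 * v / (4 - ω) with hw_def
  have hw : w * (4 - ω) = 4 * v := div_mul_cancel₀ _ h4.ne'
  have hw0 : 0 ≤ w := by positivity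
  have hsplit : (1 + u) / (1 - ε) + u + 4 * v / ((1 - ε) * (4 - ω))
      = (1 + u + u * (1 - ε) + w) / (1 - ε) := by
    rw [hw_def]; field_simp
  rw [hsplit, ← mul_div_assoc, div_le_one hε1]
  nlinarith [mul_nonneg (mul_nonneg hu hε) (by linarith : (0:ℝ) ≤ 1 - ω / 2),
    mul_nonneg (sq_nonneg ω) hw0, mul_nonneg hε (by linarith : (0:ℝ) ≤ 1 - ω)]

lemma sqrt_one_sub_mul_le_one {u v ε ω : ℝ} (hu : 0 ≤ u) (hv : 0 ≤ v) (hε : 0 ≤ ε)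
    (hω : ω ≤ 1) (hsum : 4 * u + 2 * v + 8 * ε = ω) :
    √(1 - ω) * ((1 + u) / (1 - ε) + u + 4 * v / ((1 - ε) * (4 - ω))) ≤ 1 := by
  have hε1 : 0 < 1 - ε := by linarith
  have h4 : 0 < 4 - ω := by linarith
  have hB : 0 ≤ (1 + u) / (1 - ε) + u + 4 * v / ((1 - ε) * (4 - ω)) := by positivity
  calc _ ≤ (1 - ω / 2) * ((1 + u) / (1 - ε) + u + 4 * v / ((1 - ε) * (4 - ω))) :=
        mul_le_mul_of_nonneg_right (Real.sqrt_one_sub_le_one_sub_half (by linarith)) hB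
    _ ≤ 1 := one_sub_half_mul_le_one hu hv hε hω hsum

theorem stmt_10_general (δ β C ω : ℝ)
    (hδ0 : 0 < δ) (hβ : 0 < β) (hC : 0 < C)
    (hω0 : 0 < ω) (hω1 : ω ≤ 1)
    (γ ρ : ℝ)
    (hγ : γ = 2 * ω * δ / (8 * β * δ + 4 * β ^ 2 * C + 4 * ω * δ ^ 2))
    (hρ : ρ = 1 - ω * γ * δ / 4) :
    Real.sqrt (1 - ω) * ((1 + γ * β) / ρ + γ * β
        + γ ^ 2 * β ^ 2 * C / (ρ * (ρ - 1 + γ * δ))) ≤ 1 := by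
  have hγ0 : 0 < γ := by rw [hγ]; positivity
  have hsum : 4 * (γ * β) + 2 * (γ * β ^ 2 * C / δ) + 8 * (ω * γ * δ / 4) = ω := by
    rw [hγ]; field_simp; ring
  have hgap : ρ - 1 + γ * δ = γ * δ * (4 - ω) / 4 := by rw [hρ]; ring
  have hlast : γ ^ 2 * β ^ 2 * C / (ρ * (ρ - 1 + γ * δ))
      = 4 * (γ * β ^ 2 * C / δ) / (ρ * (4 - ω)) := by
    rw [hgap]; field_simp
  rw [hlast, hρ]
  exact sqrt_one_sub_mul_le_one (by positivity) (by positivity) (by positivity) hω1 hsum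

theorem stmt_10 (δ β C ω : ℝ)
    (hδ0 : 0 < δ) (hδ1 : δ ≤ 1) (hβ : 0 < β) (hC : 0 < C)
    (hω0 : 0 < ω) (hω1 : ω ≤ 1)
    (γ ρ : ℝ)
    (hγ : γ = 2 * ω * δ / (8 * β * δ + 4 * β ^ 2 * C + 4 * ω * δ ^ 2))
    (hρ : ρ = 1 - ω * γ * δ / 4) :
    Real.sqrt (1 - ω) * ((1 + γ * β) / ρ + γ * β
        + γ ^ 2 * β ^ 2 * C / (ρ * (ρ - 1 + γ * δ))) ≤ 1 :=
  stmt_10_general δ β C ω hδ0 hβ hC hω0 hω1 γ ρ hγ hρ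
end
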